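/- arXiv:1408.4059 — 5 statements merged into one kernel-verified Lean document; each statement's English description precedes it below -/
import Mathlib

section
/- Let Γ be a subgroup of (ℝ,+) and set Γ⁺ = Γ ∩ [0,∞). Let D_{Γ⁺⊆Γ} be the closed *-subalgebra of the C*-algebra of bounded complex-valued functions on Γ (with supremum norm and pointwise operations) generated by the indicator functions 1_{a+Γ⁺} of the sets a + Γ⁺ = {a + x : x ∈ Γ⁺}, for a ∈ Γ. Let C^λ(ℝ) be the closed *-subalgebra of the C*-algebra of bounded complex-valued functions on ℝ generated by the indicator functions 1_{[a,∞)} for a ∈ Γ. Then there exists a unique *-algebra isomorphism Φ : D_{Γ⁺⊆Γ} → C^λ(ℝ) with Φ(1_{a+Γ⁺}) = 1_{[a,∞)} for all a ∈ Γ, and Φ is Γ-equivariant: for every γ ∈ Γ and f ∈ D_{Γ⁺⊆Γ}, Φ(γ·f) = γ·Φ(f), where in both algebras (γ·f)(x) = f(−γ + x). -/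
open scoped Classical BoundedContinuousFunction

noncomputable section

/-- A type synonym equipping a type with the discrete topology, so that `Disc α →ᵇ ℂ`
is the C*-algebra of all bounded complex-valued functions on `α` with the supremum
norm, pointwise operations and complex conjugation as involution. -/
def Disc (α : Type*) : Type _ := α

instance (α : Type*) : TopologicalSpace (Disc α) := ⊥
instance (α : Type*) : DiscreteTopology (Disc α) := ⟨rfl⟩

variable (Γ : AddSubgroup ℝ)

/-- The indicator function `1_{a+Γ⁺}` of `a + Γ⁺ = {a + y : y ∈ Γ, 0 ≤ y}`, as a
bounded function on `Γ`. -/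
def indGamma (a : ℝ) : Disc Γ →ᵇ ℂ :=
  BoundedContinuousFunction.ofNormedAddCommGroup
    (fun x : Γ => if ∃ y : ℝ, y ∈ Γ ∧ 0 ≤ y ∧ (x : ℝ) = a + y then (1 : ℂ) else 0)
    continuous_of_discreteTopology 1
    (by intro x; split <;> simp)

/-- The indicator function `1_{[a,∞)}`, as a bounded function on `ℝ`. -/
def indIci (a : ℝ) : Disc ℝ →ᵇ ℂ :=
  BoundedContinuousFunction.ofNormedAddCommGroup
    (fun x : ℝ => if a ≤ x then (1 : ℂ) else 0)
    continuous_of_discreteTopology 1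
    (by intro x; split <;> simp)

/-- The translation action of `γ ∈ Γ` on bounded functions on `Γ`:
`(γ · f)(x) = f(−γ + x)`. -/
def transGamma (γ : Γ) (f : Disc Γ →ᵇ ℂ) : Disc Γ →ᵇ ℂ :=
  f.compContinuous ⟨fun x : Γ => -γ + x, continuous_of_discreteTopology⟩

/-- The translation action of `γ ∈ ℝ` on bounded functions on `ℝ`:
`(γ · f)(x) = f(−γ + x)`. -/
def transReal (γ : ℝ) (f : Disc ℝ →ᵇ ℂ) : Disc ℝ →ᵇ ℂ :=
  f.compContinuous ⟨fun x : ℝ => -γ + x, continuous_of_discreteTopology⟩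

/-- `D_{Γ⁺ ⊆ Γ}`: the closed *-subalgebra of the algebra of bounded functions on `Γ`
generated by the indicator functions `1_{a+Γ⁺}`, `a ∈ Γ`. -/
def DGamma : NonUnitalStarSubalgebra ℂ (Disc Γ →ᵇ ℂ) :=
  (NonUnitalStarAlgebra.adjoin ℂ
    (Set.range fun a : Γ => indGamma Γ (a : ℝ))).topologicalClosure

/-- `C^λ(ℝ)`: the closed *-subalgebra of the algebra of bounded functions on `ℝ`
generated by the indicator functions `1_{[a,∞)}`, `a ∈ Γ`. -/
def CIci : NonUnitalStarSubalgebra ℂ (Disc ℝ →ᵇ ℂ) :=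
  (NonUnitalStarAlgebra.adjoin ℂ
    (Set.range fun a : Γ => indIci (a : ℝ))).topologicalClosure

/-!
Restriction of functions from `ℝ` to `Γ` sends `1_{[a,∞)}` to `1_{a+Γ⁺}`; its inverse is `Φ`.
Every `f` in the *-algebra generated by the `1_{[a,∞)}` takes at `x` the value it takes at all
points of `Γ ∩ [g₀, x]` for some `g₀ ∈ Γ` (and vanishes at `x` if `Γ` has no point left of `x`),
so its supremum is attained on `Γ`: restriction is isometric on `C^λ(ℝ)`. An isometric
*-homomorphism on a complete algebra has closed range, so restriction maps `C^λ(ℝ)` onto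
`D_{Γ⁺⊆Γ}`. Restriction commutes with translation by `Γ`. Uniqueness holds because
*-isomorphisms of C*-algebras are isometric, hence determined by their values on generators.
-/

open NonUnitalStarAlgebra Filter

namespace NonUnitalStarSubalgebra

section Topological

variable {R A : Type*} [CommSemiring R] [StarRing R]
  [NonUnitalSemiring A] [StarRing A] [Module R A] [IsScalarTower R A A] [SMulCommClass R A A]
  [StarModule R A] [TopologicalSpace A] [IsSemitopologicalSemiring A] [ContinuousConstSMul R A]
  [ContinuousStar A]

lemma ext_topologicalClosure_adjoin {B F : Type*} [NonUnitalSemiring B] [Module R B] [Star B]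
    [TopologicalSpace B] [T2Space B] {s : Set A}
    [FunLike F (adjoin R s).topologicalClosure B]
    [NonUnitalAlgHomClass F R (adjoin R s).topologicalClosure B]
    [StarHomClass F (adjoin R s).topologicalClosure B] {φ ψ : F}
    (hφ : Continuous φ) (hψ : Continuous ψ)
    (h : ∀ x (hx : x ∈ s), φ ⟨x, le_topologicalClosure _ (subset_adjoin R s hx)⟩ =
      ψ ⟨x, le_topologicalClosure _ (subset_adjoin R s hx)⟩) :
    φ = ψ := by
  let E := (NonUnitalStarAlgHom.equalizer (R := R) φ ψ).map
    (NonUnitalStarSubalgebraClass.subtype (adjoin R s).topologicalClosure)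
  have hE : IsClosed (E : Set A) :=
    (isClosed_topologicalClosure _).isClosedEmbedding_subtypeVal.isClosedMap _
      (isClosed_eq hφ hψ)
  have hSE : (adjoin R s).topologicalClosure ≤ E :=
    topologicalClosure_minimal _ (adjoin_le fun x hx => ⟨_, h x hx, rfl⟩) hE
  refine DFunLike.ext φ ψ fun x => ?_
  obtain ⟨y, hy, hyx⟩ := hSE x.2
  rwa [← Subtype.ext hyx]

variable {B : Type*} [NonUnitalSemiring B] [StarRing B] [Module R B] [IsScalarTower R B B]
  [SMulCommClass R B B] [StarModule R B] [TopologicalSpace B] [IsSemitopologicalSemiring B]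
  [ContinuousConstSMul R B] [ContinuousStar B]

lemma map_topologicalClosure_adjoin_le {φ : A →⋆ₙₐ[R] B} (hφ : Continuous φ) {s : Set A}
    {t : Set B} (hst : Set.MapsTo φ s t) :
    (adjoin R s).topologicalClosure.map φ ≤ (adjoin R t).topologicalClosure := by
  refine (map_topologicalClosure_le _ hφ).trans (topologicalClosure_mono ?_)
  rw [NonUnitalStarAlgHom.map_adjoin]
  exact adjoin_mono hst.image_subset

end Topological

section Normed

variable {R A B : Type*} [CommRing R] [NonUnitalNormedRing A] [Module R A] [Star A]
  [NonUnitalNormedRing B] [Module R B] [Star B]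

def equivOfMapEq (S : NonUnitalStarSubalgebra R A) (T : NonUnitalStarSubalgebra R B)
    (φ : A →⋆ₙₐ[R] B) (hnorm : ∀ x ∈ S, ‖φ x‖ = ‖x‖) (hST : S.map φ = T) : S ≃⋆ₐ[R] T :=
  let ψ := NonUnitalStarAlgHom.codRestrict (φ.comp (NonUnitalStarSubalgebraClass.subtype S)) T
    fun x => hST ▸ mem_map.2 ⟨x, x.2, rfl⟩
  StarAlgEquiv.ofBijective ψ
    ⟨(AddMonoidHomClass.isometry_of_norm ψ fun x : S => hnorm x x.2).injective, fun y => by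
      obtain ⟨x, hx, hxy⟩ := mem_map.1 (hST.ge y.2)
      exact ⟨⟨x, hx⟩, Subtype.ext hxy⟩⟩

end Normed

section Banach

variable {𝕜 A B : Type*} [NormedField 𝕜] [StarRing 𝕜]
  [NonUnitalNormedRing A] [StarRing A] [NormedSpace 𝕜 A] [IsScalarTower 𝕜 A A]
  [SMulCommClass 𝕜 A A] [StarModule 𝕜 A] [ContinuousStar A] [CompleteSpace A]
  [NonUnitalNormedRing B] [StarRing B] [NormedSpace 𝕜 B] [IsScalarTower 𝕜 B B]
  [SMulCommClass 𝕜 B B] [StarModule 𝕜 B] [ContinuousStar B]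

lemma map_topologicalClosure_adjoin {φ : A →⋆ₙₐ[𝕜] B} (hφ : Continuous φ)
    {s : Set A} (hnorm : ∀ x ∈ (adjoin 𝕜 s).topologicalClosure, ‖φ x‖ = ‖x‖) :
    (adjoin 𝕜 s).topologicalClosure.map φ = (adjoin 𝕜 (φ '' s)).topologicalClosure := by
  set S := (adjoin 𝕜 s).topologicalClosure
  refine le_antisymm (map_topologicalClosure_adjoin_le hφ (Set.mapsTo_image φ s))
    (topologicalClosure_minimal _ ?_ ?_)
  · rw [← NonUnitalStarAlgHom.map_adjoin]
    exact map_mono (le_topologicalClosure _)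
  · have : CompleteSpace S := (isClosed_topologicalClosure _).completeSpace_coe
    have hiso : Isometry (φ.comp (NonUnitalStarSubalgebraClass.subtype S)) :=
      AddMonoidHomClass.isometry_of_norm _ fun x => hnorm x x.2
    rw [coe_map, Set.image_eq_range]
    exact hiso.isClosedEmbedding.isClosed_range

end Banach

end NonUnitalStarSubalgebra

namespace BoundedContinuousFunction

variable {α δ 𝕜 β : Type*} [TopologicalSpace α] [TopologicalSpace δ] [NormedField 𝕜]
  [NonUnitalNormedRing β] [StarRing β] [NormedStarGroup β] [NormedSpace 𝕜 β]

def compContinuousNonUnitalStarAlgHom (g : C(δ, α)) : (α →ᵇ β) →⋆ₙₐ[𝕜] (δ →ᵇ β) where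
  toFun f := f.compContinuous g
  map_smul' _ _ := rfl
  map_zero' := rfl
  map_add' _ _ := rfl
  map_mul' _ _ := rfl
  map_star' _ := rfl

end BoundedContinuousFunction

open NonUnitalStarSubalgebra BoundedContinuousFunction

def restrictGamma : (Disc ℝ →ᵇ ℂ) →⋆ₙₐ[ℂ] (Disc Γ →ᵇ ℂ) :=
  compContinuousNonUnitalStarAlgHom ⟨fun x : Γ => (x : ℝ), continuous_of_discreteTopology⟩

lemma continuous_restrictGamma : Continuous (restrictGamma Γ) :=
  continuous_compContinuous _

lemma indIci_apply (a x : ℝ) : indIci a x = if a ≤ x then 1 else 0 :=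
  rfl

lemma restrictGamma_indIci (a : Γ) : restrictGamma Γ (indIci a) = indGamma Γ a := by
  refine BoundedContinuousFunction.ext fun (x : Γ) => ?_
  change (if (a : ℝ) ≤ x then (1 : ℂ) else 0) =
    if ∃ y : ℝ, y ∈ Γ ∧ 0 ≤ y ∧ (x : ℝ) = a + y then 1 else 0
  refine if_congr ⟨fun h => ⟨x - a, sub_mem x.2 a.2, sub_nonneg.2 h, by ring⟩, ?_⟩ rfl rfl
  rintro ⟨y, -, hy, hxy⟩
  linarith

lemma transReal_indIci (γ a : ℝ) : transReal γ (indIci a) = indIci (γ + a) := by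
  refine BoundedContinuousFunction.ext fun (x : ℝ) => ?_
  change (if a ≤ -γ + x then (1 : ℂ) else 0) = if γ + a ≤ x then 1 else 0
  exact if_congr ⟨fun h => by linarith, fun h => by linarith⟩ rfl rfl

lemma indIci_mem_CIci (a : Γ) : indIci a ∈ CIci Γ :=
  le_topologicalClosure _ (subset_adjoin ℂ _ ⟨a, rfl⟩)

lemma indGamma_mem_DGamma (a : Γ) : indGamma Γ a ∈ DGamma Γ :=
  le_topologicalClosure _ (subset_adjoin ℂ _ ⟨a, rfl⟩)

lemma transReal_mem_CIci (γ : Γ) {f : Disc ℝ →ᵇ ℂ} (hf : f ∈ CIci Γ) :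
    transReal γ f ∈ CIci Γ := by
  refine map_topologicalClosure_adjoin_le
    (φ := compContinuousNonUnitalStarAlgHom
      (⟨fun x : ℝ => -(γ : ℝ) + x, continuous_of_discreteTopology⟩ : C(Disc ℝ, Disc ℝ)))
    (continuous_compContinuous _) ?_ (mem_map.2 ⟨f, hf, rfl⟩)
  rintro _ ⟨a, rfl⟩
  exact ⟨γ + a, (transReal_indIci γ a).symm⟩

lemma restrictGamma_transReal (γ : Γ) (f : Disc ℝ →ᵇ ℂ) :
    restrictGamma Γ (transReal γ f) = transGamma Γ γ (restrictGamma Γ f) :=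
  rfl

def IsGammaStep (f : Disc ℝ →ᵇ ℂ) : Prop :=
  ∀ x : ℝ, (∀ᶠ g : {g : Γ // (g : ℝ) ≤ x} in atTop, f (g : ℝ) = f x) ∧
    ((∀ g : Γ, x < g) → f x = 0)

variable {Γ}

lemma isGammaStep_indIci (a : Γ) : IsGammaStep Γ (indIci a) := by
  intro x
  refine ⟨?_, fun h => if_neg (h a).not_ge⟩
  by_cases hax : (a : ℝ) ≤ x
  · filter_upwards [eventually_ge_atTop ⟨a, hax⟩] with g hg
    simp only [indIci_apply, if_pos hax, if_pos (show (a : ℝ) ≤ g from hg)]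
  · refine Eventually.of_forall fun g => ?_
    simp only [indIci_apply, if_neg hax, if_neg fun h : (a : ℝ) ≤ g => hax (h.trans g.2)]

lemma IsGammaStep.of_apply₂ {f₁ f₂ f : Disc ℝ →ᵇ ℂ} (op : ℂ → ℂ → ℂ) (h0 : op 0 0 = 0)
    (h₁ : IsGammaStep Γ f₁) (h₂ : IsGammaStep Γ f₂) (hf : ∀ x : ℝ, f x = op (f₁ x) (f₂ x)) :
    IsGammaStep Γ f := by
  intro x
  obtain ⟨h₁, h₁'⟩ := h₁ x
  obtain ⟨h₂, h₂'⟩ := h₂ x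
  refine ⟨?_, fun h => by rw [hf, h₁' h, h₂' h, h0]⟩
  filter_upwards [h₁, h₂] with g hg₁ hg₂
  rw [hf, hf, hg₁, hg₂]

lemma isGammaStep_of_mem_adjoin {f : Disc ℝ →ᵇ ℂ}
    (hf : f ∈ adjoin ℂ (Set.range fun a : Γ => indIci (a : ℝ))) : IsGammaStep Γ f := by
  induction hf using adjoin_induction with
  | mem f hf => obtain ⟨a, rfl⟩ := hf; exact isGammaStep_indIci a
  | zero => exact fun x => ⟨Eventually.of_forall fun _ => rfl, fun _ => rfl⟩
  | add f g _ _ hf hg => exact hf.of_apply₂ (· + ·) (add_zero 0) hg fun _ => rfl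
  | mul f g _ _ hf hg => exact hf.of_apply₂ (· * ·) (mul_zero 0) hg fun _ => rfl
  | smul c f _ hf => exact hf.of_apply₂ (fun z _ => c * z) (mul_zero c) hf fun _ => rfl
  | star f _ hf => exact hf.of_apply₂ (fun z _ => star z) (star_zero _) hf fun _ => rfl

lemma IsGammaStep.norm_apply_le {f : Disc ℝ →ᵇ ℂ} (hf : IsGammaStep Γ f) (x : ℝ) :
    ‖f x‖ ≤ ‖restrictGamma Γ f‖ := by
  by_cases hx : ∃ g : Γ, (g : ℝ) ≤ x
  · obtain ⟨g, hg⟩ := hx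
    have : Nonempty {g : Γ // (g : ℝ) ≤ x} := ⟨⟨g, hg⟩⟩
    obtain ⟨g', hg'⟩ := (hf x).1.exists
    rw [← hg']
    exact (restrictGamma Γ f).norm_coe_le_norm g'.1
  · simp only [not_exists, not_le] at hx
    rw [(hf x).2 hx, norm_zero]
    exact norm_nonneg _

variable (Γ)

lemma norm_restrictGamma_of_mem_CIci {f : Disc ℝ →ᵇ ℂ} (hf : f ∈ CIci Γ) :
    ‖restrictGamma Γ f‖ = ‖f‖ := by
  refine ((isClosed_eq (continuous_norm.comp (continuous_restrictGamma Γ))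
    continuous_norm).closure_subset_iff.2 (fun f hf => ?_)) hf
  exact le_antisymm (norm_compContinuous_le _ _)
    ((norm_le (norm_nonneg _)).2 (isGammaStep_of_mem_adjoin hf).norm_apply_le)

lemma map_restrictGamma_CIci : (CIci Γ).map (restrictGamma Γ) = DGamma Γ := by
  rw [CIci, map_topologicalClosure_adjoin (continuous_restrictGamma Γ)
    fun _ => norm_restrictGamma_of_mem_CIci Γ, ← Set.range_comp]
  simp only [Function.comp_def, restrictGamma_indIci]
  rfl

def restrictEquiv : CIci Γ ≃⋆ₐ[ℂ] DGamma Γ :=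
  equivOfMapEq _ _ (restrictGamma Γ) (fun _ => norm_restrictGamma_of_mem_CIci Γ)
    (map_restrictGamma_CIci Γ)

lemma restrictEquiv_indIci (a : Γ) :
    restrictEquiv Γ ⟨indIci a, indIci_mem_CIci Γ a⟩ = ⟨indGamma Γ a, indGamma_mem_DGamma Γ a⟩ :=
  Subtype.ext (restrictGamma_indIci Γ a)

lemma coe_restrictEquiv_symm_eq_iff (g : DGamma Γ) {f : Disc ℝ →ᵇ ℂ} (hf : f ∈ CIci Γ) :
    ((restrictEquiv Γ).symm g : Disc ℝ →ᵇ ℂ) = f ↔ (g : Disc Γ →ᵇ ℂ) = restrictGamma Γ f := by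
  calc _ ↔ (restrictEquiv Γ).symm g = ⟨f, hf⟩ := Subtype.ext_iff.symm
    _ ↔ g = restrictEquiv Γ ⟨f, hf⟩ := StarAlgEquiv.symm_apply_eq _
    _ ↔ _ := Subtype.ext_iff

-- These make `CIci Γ` and `DGamma Γ` C*-algebras, so *-isomorphisms between them are isometric.
instance : IsClosed (CIci Γ : Set (Disc ℝ →ᵇ ℂ)) :=
  isClosed_topologicalClosure _

instance : IsClosed (DGamma Γ : Set (Disc Γ →ᵇ ℂ)) :=
  isClosed_topologicalClosure _

/-- Let `Γ` be a subgroup of `(ℝ,+)` and `Γ⁺ = Γ ∩ [0,∞)`.  There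
exists a unique *-algebra isomorphism `Φ : D_{Γ⁺⊆Γ} → C^λ(ℝ)` with
`Φ(1_{a+Γ⁺}) = 1_{[a,∞)}` for all `a ∈ Γ`, and `Φ` is `Γ`-equivariant for the
translation actions `(γ·f)(x) = f(−γ+x)` on both sides. -/
theorem DGamma_iso_CIci (Γ : AddSubgroup ℝ) :
    ∃ Φ : DGamma Γ ≃⋆ₐ[ℂ] CIci Γ,
      (∀ a : Γ, ∀ h : indGamma Γ (a : ℝ) ∈ DGamma Γ,
        ((Φ ⟨indGamma Γ (a : ℝ), h⟩ : Disc ℝ →ᵇ ℂ) = indIci (a : ℝ))) ∧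
      (∀ γ : Γ, ∀ f : Disc ↥Γ →ᵇ ℂ, ∀ hf : f ∈ DGamma Γ,
        ∀ hγf : transGamma Γ γ f ∈ DGamma Γ,
          ((Φ ⟨transGamma Γ γ f, hγf⟩ : Disc ℝ →ᵇ ℂ) =
            transReal (γ : ℝ) (Φ ⟨f, hf⟩ : Disc ℝ →ᵇ ℂ))) ∧
      ∀ Ψ : DGamma Γ ≃⋆ₐ[ℂ] CIci Γ,
        (∀ a : Γ, ∀ h : indGamma Γ (a : ℝ) ∈ DGamma Γ,
          ((Ψ ⟨indGamma Γ (a : ℝ), h⟩ : Disc ℝ →ᵇ ℂ) = indIci (a : ℝ))) → Ψ = Φ := by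
  refine ⟨(restrictEquiv Γ).symm, fun a _ => ?_, fun γ f hf _ => ?_, fun Ψ hΨ => ?_⟩
  · exact (coe_restrictEquiv_symm_eq_iff Γ _ (indIci_mem_CIci Γ a)).2
      (restrictGamma_indIci Γ a).symm
  · have hf' : restrictGamma Γ ((restrictEquiv Γ).symm ⟨f, hf⟩) = f :=
      ((coe_restrictEquiv_symm_eq_iff Γ _ (Subtype.prop _)).1 rfl).symm
    refine (coe_restrictEquiv_symm_eq_iff Γ _ (transReal_mem_CIci Γ γ (Subtype.prop _))).2 ?_
    rw [restrictGamma_transReal, hf']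
  · have : Ψ.symm = restrictEquiv Γ := by
      refine ext_topologicalClosure_adjoin (StarAlgEquiv.isometry Ψ.symm).continuous
        (StarAlgEquiv.isometry (restrictEquiv Γ)).continuous ?_
      rintro _ ⟨a, rfl⟩
      exact (Ψ.symm_apply_eq.2 (Subtype.ext (hΨ a (indGamma_mem_DGamma Γ a)).symm)).trans
        (restrictEquiv_indIci Γ a).symm
    rw [← this, StarAlgEquiv.symm_symm]
end
end

section
/- Let G be an abelian group and φ : G → G a group endomorphism. Let G_∞ be the direct limit of the sequence G →φ G →φ G →φ ⋯, with structure maps ι_n : G → G_∞ from the n-th copy of G, and let φ_∞ : G_∞ → G_∞ be the unique endomorphism satisfying φ_∞ ∘ ι_n = ι_n ∘ φ for all n. Write ι = ι_1 for the map from the first copy of G. Then ι restricts to a group isomorphism from Ker(id_G − φ) onto Ker(id_{G_∞} − φ_∞). -/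
universe u v

/-!
The images of the `ι n` exhaust `G_∞`: the quotient of `G_∞` by their union receives two maps
compatible with the cocone, zero and the projection, which must agree. Exactness of the direct
limit, read off from Mathlib's concrete model `AddCommGroup.DirectLimit`, says that `ι n a = 0`
only if `φ^[k] a = 0` for some `k`. So a fixed point killed by `ι 0` is zero, and a fixed point
`ι n x` of `φ_∞` gives `φ^[k] (φ x - x) = 0` for some `k`, making `φ^[k] x` a fixed point
of `φ` with `ι 0 (φ^[k] x) = ι n x`.
-/

theorem AddMonoidHom.mem_ker_id_sub_iff {M : Type*} [AddCommGroup M] (f : M →+ M) {x : M} :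
    x ∈ (AddMonoidHom.id M - f).ker ↔ f x = x := by
  rw [AddMonoidHom.mem_ker, AddMonoidHom.sub_apply, AddMonoidHom.id_apply, sub_eq_zero, eq_comm]

namespace SeqDirectLimit

variable {G : Type u} [AddCommGroup G] {L : Type v} [AddCommGroup L]

def IsUniversal (φ : G →+ G) (ι : ℕ → (G →+ L)) : Prop :=
  ∀ (H : Type (max u v)) [AddCommGroup H] (j : ℕ → (G →+ H)),
    (∀ n, j n = (j (n + 1)).comp φ) → ∃! u : L →+ H, ∀ n, u.comp (ι n) = j n

variable {φ : G →+ G} {ι : ℕ → (G →+ L)}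

theorem apply_eq_apply_iterate (hcocone : ∀ n, ι n = (ι (n + 1)).comp φ) (n k : ℕ) (x : G) :
    ι n x = ι (n + k) (φ^[k] x) := by
  induction k generalizing n x with
  | zero => rfl
  | succ k ih =>
    rw [Function.iterate_succ_apply, show n + (k + 1) = n + 1 + k by omega, ← ih, hcocone n]
    rfl

theorem hom_ext (hcocone : ∀ n, ι n = (ι (n + 1)).comp φ) (hι : IsUniversal φ ι)
    {H : Type (max u v)} [AddCommGroup H] {u₁ u₂ : L →+ H}
    (h : ∀ n, u₁.comp (ι n) = u₂.comp (ι n)) : u₁ = u₂ :=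
  (hι H (fun n => u₁.comp (ι n)) fun n => by rw [hcocone n]; rfl).unique (fun _ => rfl)
    fun n => (h n).symm

theorem exists_apply_eq (hcocone : ∀ n, ι n = (ι (n + 1)).comp φ) (hι : IsUniversal φ ι)
    (z : L) : ∃ n x, ι n x = z := by
  let S : AddSubgroup L := ⨆ n, (ι n).range
  have hS : z ∈ S := by
    let q : L →+ ULift.{u} (L ⧸ S) :=
      AddEquiv.ulift.symm.toAddMonoidHom.comp (QuotientAddGroup.mk' S)
    have hq : q = 0 := hom_ext hcocone hι fun n => by
      ext x
      exact (QuotientAddGroup.eq_zero_iff _).mpr (le_iSup (fun n => (ι n).range) n ⟨x, rfl⟩)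
    exact (QuotientAddGroup.eq_zero_iff z).mp (congrArg ULift.down (DFunLike.congr_fun hq z))
  have hmono : Monotone fun n => (ι n).range := by
    refine monotone_nat_of_le_succ fun n => ?_
    rintro _ ⟨x, rfl⟩
    exact ⟨φ x, by rw [hcocone n]; rfl⟩
  exact (AddSubgroup.mem_iSup_of_directed hmono.directed_le).mp hS

variable (φ) in
def iterateSystem (i j : ℕ) (_ : i ≤ j) : G →+ G :=
  AddMonoidHom.mk' φ^[j - i] (iterate_map_add φ _)

instance : DirectedSystem (fun _ : ℕ => G) (fun i j h => iterateSystem φ i j h) where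
  map_self i x := by simp [iterateSystem]
  map_map {k j i} hij hjk x := by
    simp only [iterateSystem, AddMonoidHom.mk'_apply]
    rw [← Function.iterate_add_apply, tsub_add_tsub_cancel hjk hij]

theorem exists_iterate_eq_zero (hι : IsUniversal φ ι) {n : ℕ} {a : G} (ha : ι n a = 0) :
    ∃ k, φ^[k] a = 0 := by
  let of := AddCommGroup.DirectLimit.of (fun _ : ℕ => G) (iterateSystem φ)
  let j n : G →+ ULift.{v} _ := AddEquiv.ulift.symm.toAddMonoidHom.comp (of n)
  obtain ⟨e, he, -⟩ := hι _ j fun n => by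
    ext x
    show of n x = of (n + 1) (φ x)
    rw [← AddCommGroup.DirectLimit.of_f (Nat.le_succ n)]
    simp [of, iterateSystem]
  have hof : of n a = 0 := by
    have h := congrArg ULift.down (DFunLike.congr_fun (he n) a)
    rw [AddMonoidHom.comp_apply, ha, map_zero] at h
    exact h.symm
  obtain ⟨m, _, hm⟩ := AddCommGroup.DirectLimit.of.zero_exact _ _ hof
  exact ⟨m - n, hm⟩

end SeqDirectLimit

open SeqDirectLimit in
/-- Let `G` be an abelian group, `φ : G → G` an endomorphism, and let
`Glim` be the direct limit of `G →φ G →φ G →φ ⋯` with structure maps `ι n : G →+ Glim`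
(so that `ι n = ι (n+1) ∘ φ`, and `(Glim, ι)` is universal among such cocones), and let
`philim : Glim →+ Glim` be the endomorphism determined by `philim ∘ ι n = ι n ∘ φ` for
all `n`.  Then `ι 0`, the map from the first copy of `G`, restricts to a group
isomorphism (an additive bijection) from `Ker(id − φ)` onto `Ker(id − philim)`. -/
theorem kernel_iso_of_directLimit {G : Type u} [AddCommGroup G] (φ : G →+ G)
    {Glim : Type v} [AddCommGroup Glim] (ι : ℕ → (G →+ Glim))
    (hcocone : ∀ n, ι n = (ι (n + 1)).comp φ)
    (huniv : ∀ (H : Type (max u v)) [AddCommGroup H] (j : ℕ → (G →+ H)),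
      (∀ n, j n = (j (n + 1)).comp φ) → ∃! u : Glim →+ H, ∀ n, u.comp (ι n) = j n)
    (philim : Glim →+ Glim) (hphilim : ∀ n, philim.comp (ι n) = (ι n).comp φ) :
    Set.BijOn (ι 0)
      ((AddMonoidHom.id G - φ).ker : Set G)
      ((AddMonoidHom.id Glim - philim).ker : Set Glim) := by
  have hphilim_apply (n : ℕ) (x : G) : philim (ι n x) = ι n (φ x) :=
    DFunLike.congr_fun (hphilim n) x
  simp only [Set.BijOn, Set.MapsTo, Set.InjOn, Set.SurjOn, Set.subset_def, Set.mem_image,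
    SetLike.mem_coe, AddMonoidHom.mem_ker_id_sub_iff]
  refine ⟨fun x hx => by rw [hphilim_apply, hx], fun x hx y hy hxy => ?_, fun z hz => ?_⟩
  · obtain ⟨k, hk⟩ := exists_iterate_eq_zero huniv (a := x - y)
      (by rw [map_sub, hxy, sub_self])
    rwa [Function.iterate_fixed (by rw [map_sub, hx, hy]), sub_eq_zero] at hk
  · obtain ⟨n, x, rfl⟩ := exists_apply_eq hcocone huniv z
    obtain ⟨k, hk⟩ := exists_iterate_eq_zero huniv (a := φ x - x)
      (by rw [map_sub, ← hphilim_apply, hz, sub_self])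
    have hfix : φ (φ^[k] x) = φ^[k] x := by
      rwa [iterate_map_sub, ← Function.iterate_succ_apply, Function.iterate_succ_apply',
        sub_eq_zero] at hk
    refine ⟨φ^[k] x, hfix, ?_⟩
    rw [apply_eq_apply_iterate hcocone 0 (n + k), Function.iterate_fixed hfix, zero_add,
      apply_eq_apply_iterate hcocone n k x]
end

section
/- Let G be an abelian group and φ : G → G a group endomorphism. Let G_∞ be the direct limit of the sequence G →φ G →φ G →φ ⋯, with structure maps ι_n : G → G_∞, and let φ_∞ : G_∞ → G_∞ be the unique endomorphism satisfying φ_∞ ∘ ι_n = ι_n ∘ φ for all n. Write ι = ι_1. Then ι maps (id_G − φ)(G) into (id_{G_∞} − φ_∞)(G_∞) and the induced homomorphism Coker(id_G − φ) → Coker(id_{G_∞} − φ_∞) is an isomorphism. -/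
universe u v

/-- Let `G` be an abelian group, `φ : G → G` an endomorphism, and let
`Glim` be the direct limit of `G →φ G →φ G →φ ⋯` with structure maps `ι n : G →+ Glim`
(so that `ι n = ι (n+1) ∘ φ`, and `(Glim, ι)` is universal among such cocones), and let
`philim : Glim →+ Glim` be the endomorphism determined by `philim ∘ ι n = ι n ∘ φ` for
all `n`.  Then `ι 0` maps `(id − φ)(G)` into `(id − philim)(Glim)`, and the induced
homomorphism `Coker(id − φ) → Coker(id − philim)` is an isomorphism. -/
theorem cokernel_iso_of_directLimit {G : Type u} [AddCommGroup G] (φ : G →+ G)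
    {Glim : Type v} [AddCommGroup Glim] (ι : ℕ → (G →+ Glim))
    (hcocone : ∀ n, ι n = (ι (n + 1)).comp φ)
    (huniv : ∀ (H : Type (max u v)) [AddCommGroup H] (j : ℕ → (G →+ H)),
      (∀ n, j n = (j (n + 1)).comp φ) → ∃! u : Glim →+ H, ∀ n, u.comp (ι n) = j n)
    (philim : Glim →+ Glim) (hphilim : ∀ n, philim.comp (ι n) = (ι n).comp φ) :
    (∀ x ∈ (AddMonoidHom.id G - φ).range, ι 0 x ∈ (AddMonoidHom.id Glim - philim).range) ∧
    ∃ u : G ⧸ (AddMonoidHom.id G - φ).range →+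
          Glim ⧸ (AddMonoidHom.id Glim - philim).range,
      (∀ x : G, u (QuotientAddGroup.mk x) = QuotientAddGroup.mk (ι 0 x)) ∧
      Function.Bijective u := by
  set K : AddSubgroup G := (AddMonoidHom.id G - φ).range with hK
  set K' : AddSubgroup Glim := (AddMonoidHom.id Glim - philim).range with hK'
  have hphi : ∀ n x, philim (ι n x) = ι n (φ x) := fun n x => by
    have := congrArg (fun f : G →+ Glim => f x) (hphilim n); simpa using this
  have hco : ∀ n x, ι n x = ι (n + 1) (φ x) := fun n x => by
    have := congrArg (fun f : G →+ Glim => f x) (hcocone n); simpa using this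
  -- Part 1
  have part1 : ∀ x ∈ K, ι 0 x ∈ K' := by
    rintro x ⟨y, rfl⟩
    exact ⟨ι 0 y, by simp [hphi 0 y]⟩
  refine ⟨part1, ?_⟩
  -- mk' K ∘ φ = mk' K
  have hmkφ : (QuotientAddGroup.mk' K).comp φ = QuotientAddGroup.mk' K := by
    ext x
    simp only [AddMonoidHom.comp_apply, QuotientAddGroup.mk'_apply]
    rw [QuotientAddGroup.eq]
    exact ⟨x, by simp [sub_eq_add_neg, add_comm]⟩
  -- mk' K' kills differences along the system and along philim
  have hmkstep : ∀ n x, QuotientAddGroup.mk' K' (ι n x) = QuotientAddGroup.mk' K' (ι 0 x) := by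
    intro n
    induction n with
    | zero => intro x; rfl
    | succ n ih =>
      intro x
      have h1 : QuotientAddGroup.mk' K' (ι (n+1) x) = QuotientAddGroup.mk' K' (ι n x) := by
        rw [QuotientAddGroup.mk'_apply, QuotientAddGroup.mk'_apply, QuotientAddGroup.eq]
        refine ⟨-(ι (n+1) x), ?_⟩
        have h2 : ι n x = philim (ι (n+1) x) := by rw [hphi (n+1) x, ← hco n x]
        simp only [AddMonoidHom.sub_apply, AddMonoidHom.id_apply, map_neg, h2]
        abel
      rw [h1, ih]
  -- construct the map u
  have hker : K ≤ ((QuotientAddGroup.mk' K').comp (ι 0)).ker := by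
    intro x hx
    simp only [AddMonoidHom.mem_ker, AddMonoidHom.comp_apply, QuotientAddGroup.mk'_apply]
    exact (QuotientAddGroup.eq_zero_iff _).mpr (part1 x hx)
  refine ⟨QuotientAddGroup.lift K ((QuotientAddGroup.mk' K').comp (ι 0)) hker, fun x => rfl, ?_, ?_⟩
  · -- injectivity
    -- build retraction via universal property with H = ULift (G ⧸ K)
    set e : ULift.{v} (G ⧸ K) ≃+ (G ⧸ K) := AddEquiv.ulift
    set j : ℕ → (G →+ ULift.{v} (G ⧸ K)) :=
      fun _ => e.symm.toAddMonoidHom.comp (QuotientAddGroup.mk' K) with hj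
    have hjco : ∀ n, j n = (j (n + 1)).comp φ := by
      intro n
      simp only [hj, AddMonoidHom.comp_assoc, hmkφ]
    obtain ⟨v, hv, hvuniq⟩ := huniv (ULift.{v} (G ⧸ K)) j hjco
    set v' : Glim →+ (G ⧸ K) := e.toAddMonoidHom.comp v with hv'
    have hv'ι : ∀ n x, v' (ι n x) = QuotientAddGroup.mk' K x := by
      intro n x
      have := congrArg (fun f : G →+ ULift.{v} (G ⧸ K) => f x) (hv n)
      simp only [AddMonoidHom.comp_apply] at this
      simp [hv', this, hj]
    have hvphi : v.comp philim = v := by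
      have h1 : ∀ n, (v.comp philim).comp (ι n) = j n := by
        intro n
        rw [AddMonoidHom.comp_assoc, hphilim n, ← AddMonoidHom.comp_assoc, hv n,
          ← hjco n]
      rw [hvuniq (v.comp philim) h1, hvuniq v hv]
    have hv'phi : ∀ y, v' (philim y) = v' y := by
      intro y
      have := congrArg (fun f : Glim →+ ULift.{v} (G ⧸ K) => f y) hvphi
      simp only [AddMonoidHom.comp_apply] at this
      simp [hv', this]
    rw [injective_iff_map_eq_zero]
    intro a ha
    obtain ⟨x, rfl⟩ := QuotientAddGroup.mk'_surjective K a
    have ha' : QuotientAddGroup.mk' K' (ι 0 x) = 0 := ha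
    have h0 : ι 0 x ∈ K' := (QuotientAddGroup.eq_zero_iff _).mp ha'
    obtain ⟨y, hy⟩ := h0
    have : v' (ι 0 x) = 0 := by
      rw [← hy]
      simp [hv'phi y]
    rw [hv'ι 0 x] at this
    exact this
  · -- surjectivity
    -- show every element of Glim lies in some range (ι n)
    have hmono : Monotone (fun n => (ι n).range) := by
      apply monotone_nat_of_le_succ
      intro n y hy
      obtain ⟨x, rfl⟩ := hy
      exact ⟨φ x, (hco n x).symm⟩
    have hrange : ∀ y : Glim, ∃ n x, ι n x = y := by
      intro y
      set S : AddSubgroup Glim := ⨆ n, (ι n).range with hS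
      have hmem : ∀ n x, ι n x ∈ S := fun n x =>
        AddSubgroup.mem_iSup_of_mem n ⟨x, rfl⟩
      set jS : ℕ → (G →+ ULift.{u} S) := fun n =>
        (AddEquiv.ulift.symm.toAddMonoidHom).comp
          ((ι n).codRestrict S (hmem n)) with hjS
      have hjSco : ∀ n, jS n = (jS (n + 1)).comp φ := by
        intro n
        ext x
        simp [hjS, AddMonoidHom.codRestrict, hco n x]
      obtain ⟨w, hw, -⟩ := huniv (ULift.{u} S) jS hjSco
      -- incl ∘ down ∘ w = id by uniqueness in ULift Glim
      set p : Glim →+ Glim :=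
        S.subtype.comp (AddEquiv.ulift.toAddMonoidHom.comp w) with hp
      have hpι : ∀ n, p.comp (ι n) = ι n := by
        intro n
        ext x
        have := congrArg (fun f : G →+ ULift.{u} S => f x) (hw n)
        simp only [AddMonoidHom.comp_apply] at this
        simp [hp, this, hjS, AddMonoidHom.codRestrict]
      -- uniqueness with H = ULift Glim
      set eG : ULift.{u} Glim ≃+ Glim := AddEquiv.ulift
      set jG : ℕ → (G →+ ULift.{u} Glim) := fun n =>
        eG.symm.toAddMonoidHom.comp (ι n) with hjG
      have hjGco : ∀ n, jG n = (jG (n + 1)).comp φ := by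
        intro n; simp only [hjG, AddMonoidHom.comp_assoc, ← hcocone n]
      obtain ⟨q, -, hquniq⟩ := huniv (ULift.{u} Glim) jG hjGco
      have h1 : eG.symm.toAddMonoidHom.comp p = q := by
        apply hquniq
        intro n
        rw [AddMonoidHom.comp_assoc, hpι n]
      have h2 : eG.symm.toAddMonoidHom.comp (AddMonoidHom.id Glim) = q := by
        apply hquniq
        intro n
        simp [hjG]
      have hpid : p = AddMonoidHom.id Glim := by
        have := h1.trans h2.symm
        ext z
        have hz := congrArg (fun f : Glim →+ ULift.{u} Glim => f z) this
        simp only [AddMonoidHom.comp_apply] at hz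
        exact congrArg eG hz ▸ by simpa using congrArg eG.toFun hz
      have hpy : p y = y := by rw [hpid]; rfl
      have hyS : y ∈ S := by
        rw [← hpy, hp]
        exact (AddEquiv.ulift (w y) : S).2
      obtain ⟨n, hn⟩ := (AddSubgroup.mem_iSup_of_directed hmono.directed_le).mp hyS
      obtain ⟨x, hx⟩ := hn
      exact ⟨n, x, hx⟩
    intro b
    obtain ⟨y, rfl⟩ := QuotientAddGroup.mk'_surjective K' b
    obtain ⟨n, x, rfl⟩ := hrange y
    refine ⟨QuotientAddGroup.mk' K x, ?_⟩
    show QuotientAddGroup.mk' K' (ι 0 x) = QuotientAddGroup.mk' K' (ι n x)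
    exact (hmkstep n x).symm
end

section
/- Let n ≥ 2 be an integer which is not a perfect square and let λ = √n. Then Γ_λ/(1−λ)Γ_λ ≅ ℤ/(n−1)ℤ, where Γ_λ = (ℤ[λ,λ⁻¹],+) and (1−λ)Γ_λ = {(1−λ)x : x ∈ Γ_λ}. -/
/-!
Write `Γ = ℤ[λ, λ⁻¹]` and `I = (1 - λ)Γ`, an ideal of `Γ`. Modulo `I` both `λ` and
`λ⁻¹ = 1 + (1 - λ)λ⁻¹` are `≡ 1`, so the ring `Γ/I` is generated by `1`: it is a quotient of `ℤ`.
Its characteristic is `n - 1`. Indeed `n - 1 = (1 - λ)(-1 - λ) ∈ I`; conversely, if `m = (1 - λ)y`,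
write `y nᵏ = a + bλ` with `a, b ∈ ℤ`; comparing coefficients of `1` and of the irrational `λ` in
`m nᵏ = (a - bn) + (b - a)λ` gives `m nᵏ = -a(n - 1)`, and `n - 1` is prime to `n`.
-/

theorem Irrational.intCast_add_intCast_mul_eq_zero_iff {t : ℝ} (ht : Irrational t) {a b : ℤ} :
    (a : ℝ) + b * t = 0 ↔ a = 0 ∧ b = 0 := by
  refine ⟨fun h => ?_, by rintro ⟨rfl, rfl⟩; simp⟩
  obtain rfl : b = 0 := by
    by_contra hb
    exact ((ht.intCast_mul hb).intCast_add a).ne_zero h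
  simpa using h

theorem exists_mul_pow_eq_intCast_add_intCast_mul {K : Type*} [Field K] {t : K} {n : ℤ}
    (ht : t * t = n) {x : K} (hx : x ∈ Subring.closure {t, t⁻¹}) :
    ∃ (a b : ℤ) (k : ℕ), x * n ^ k = a + b * t := by
  induction hx using Subring.closure_induction with
  | mem x hx =>
    rcases hx with rfl | rfl
    · exact ⟨0, 1, 0, by simp⟩
    · exact ⟨0, 1, 1, by rw [pow_one, ← ht, ← mul_assoc, inv_mul_mul_self]; simp⟩
  | zero => exact ⟨0, 0, 0, by simp⟩
  | one => exact ⟨1, 0, 0, by simp⟩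
  | add x y _ _ ihx ihy =>
    obtain ⟨a, b, k, hx⟩ := ihx
    obtain ⟨c, d, j, hy⟩ := ihy
    refine ⟨a * n ^ j + c * n ^ k, b * n ^ j + d * n ^ k, k + j, ?_⟩
    push_cast
    linear_combination (n : K) ^ j * hx + (n : K) ^ k * hy
  | neg x _ ih =>
    obtain ⟨a, b, k, hx⟩ := ih
    exact ⟨-a, -b, k, by push_cast; linear_combination -hx⟩
  | mul x y _ _ ihx ihy =>
    obtain ⟨a, b, k, hx⟩ := ihx
    obtain ⟨c, d, j, hy⟩ := ihy
    refine ⟨a * c + b * d * n, a * d + b * c, k + j, ?_⟩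
    push_cast
    linear_combination y * (n : K) ^ j * hx + (a + b * t) * hy + b * d * ht

theorem dvd_of_intCast_eq_mul_one_sub {t : ℝ} {n : ℤ} (hirr : Irrational t) (ht : t * t = n)
    {m : ℤ} {y : ℝ} (hy : y ∈ Subring.closure {t, t⁻¹}) (hm : (m : ℝ) = y * (1 - t)) :
    n - 1 ∣ m := by
  obtain ⟨a, b, k, hy⟩ := exists_mul_pow_eq_intCast_add_intCast_mul ht hy
  have hcoeffs : ((m * n ^ k - a + b * n : ℤ) : ℝ) + ((a - b : ℤ) : ℝ) * t = 0 := by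
    push_cast
    linear_combination (n : ℝ) ^ k * hm + (1 - t) * hy - b * ht
  obtain ⟨hconst, hlin⟩ := hirr.intCast_add_intCast_mul_eq_zero_iff.mp hcoeffs
  have hdvd : n - 1 ∣ m * n ^ k := ⟨-a, by linear_combination hconst + n * hlin⟩
  have hcop : IsCoprime (n - 1) (n ^ k) := IsCoprime.pow_right ⟨-1, 1, by ring⟩
  exact hcop.dvd_of_dvd_mul_right hdvd

theorem RingHom.range_le_of_apply_generator_mem {R S : Type*} [Ring R] [Ring S] {s : Set R}
    (f : Subring.closure s →+* S) {T : Subring S}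
    (hs : ∀ x (hx : x ∈ s), f ⟨x, Subring.subset_closure hx⟩ ∈ T) : f.range ≤ T := by
  rintro _ ⟨⟨x, hx⟩, rfl⟩
  induction hx using Subring.closure_induction with
  | mem x hx => exact hs x hx
  | zero => exact (map_zero f).symm ▸ T.zero_mem
  | one => exact (map_one f).symm ▸ T.one_mem
  | add x y hx hy ihx ihy => exact (map_add f ⟨x, hx⟩ ⟨y, hy⟩).symm ▸ T.add_mem ihx ihy
  | neg x hx ih => exact (map_neg f ⟨x, hx⟩).symm ▸ T.neg_mem ih
  | mul x y hx hy ihx ihy => exact (map_mul f ⟨x, hx⟩ ⟨y, hy⟩).symm ▸ T.mul_mem ihx ihy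

theorem AddMonoidHom.range_mulLeft {R : Type*} [CommRing R] (a : R) :
    (AddMonoidHom.mulLeft a).range = (Ideal.span {a}).toAddSubgroup := by
  ext x
  simp [Ideal.mem_span_singleton', mul_comm]

noncomputable def ZMod.ringEquivOfIntCastSurjective (R : Type*) [Ring R] (p : ℕ) [CharP R p]
    (h : Function.Surjective (Int.cast : ℤ → R)) : ZMod p ≃+* R :=
  RingEquiv.ofBijective (ZMod.castHom dvd_rfl R)
    ⟨ZMod.castHom_injective R, fun r => by obtain ⟨m, rfl⟩ := h r; exact ⟨m, map_intCast _ m⟩⟩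

section

variable {t : ℝ} (u : Subring.closure {t, t⁻¹})

theorem intCast_surjective_quotient_span_one_sub (hu : (u : ℝ) = t) (ht : t ≠ 0) :
    Function.Surjective (Int.cast : ℤ → Subring.closure {t, t⁻¹} ⧸ Ideal.span {1 - u}) := by
  have hgen : ∀ x (hx : x ∈ ({t, t⁻¹} : Set ℝ)),
      Ideal.Quotient.mk (Ideal.span {1 - u}) ⟨x, Subring.subset_closure hx⟩ ∈ (⊥ : Subring _) := by
    intro x hx
    refine Subring.mem_bot.mpr ⟨1, ?_⟩
    rw [Int.cast_one, ← map_one (Ideal.Quotient.mk _), Ideal.Quotient.eq, Ideal.mem_span_singleton']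
    rcases hx with rfl | rfl
    · exact ⟨1, Subtype.ext (by push_cast [hu]; ring)⟩
    · refine ⟨-⟨t⁻¹, Subring.subset_closure (by simp)⟩, Subtype.ext ?_⟩
      push_cast [hu]
      field_simp
      ring
  intro q
  obtain ⟨x, rfl⟩ := Ideal.Quotient.mk_surjective q
  exact Subring.mem_bot.mp (RingHom.range_le_of_apply_generator_mem _ hgen ⟨x, rfl⟩)

theorem intCast_mem_span_one_sub_iff (hu : (u : ℝ) = t) (hirr : Irrational t) {n : ℤ}
    (htn : t * t = n) (m : ℤ) :
    (m : Subring.closure {t, t⁻¹}) ∈ Ideal.span {1 - u} ↔ n - 1 ∣ m := by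
  rw [Ideal.mem_span_singleton']
  constructor
  · rintro ⟨y, hy⟩
    exact dvd_of_intCast_eq_mul_one_sub hirr htn y.2
      (by simpa [hu] using (congrArg Subtype.val hy).symm)
  · rintro ⟨k, rfl⟩
    refine ⟨-k * (1 + u), Subtype.ext ?_⟩
    push_cast [hu]
    linear_combination k * htn

theorem charP_quotient_span_one_sub (hu : (u : ℝ) = t) (hirr : Irrational t) {n : ℕ}
    (htn : t * t = n) :
    CharP (Subring.closure {t, t⁻¹} ⧸ Ideal.span {1 - u}) (n - 1) := by
  have hn : 1 ≤ n := Nat.one_le_iff_ne_zero.mpr <| by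
    rintro rfl
    exact hirr.ne_zero (mul_self_eq_zero.mp (by exact_mod_cast htn))
  refine ⟨fun m => ?_⟩
  rw [← map_natCast (Ideal.Quotient.mk _), Ideal.Quotient.eq_zero_iff_mem, ← Int.cast_natCast,
    intCast_mem_span_one_sub_iff u hu hirr (n := n) (mod_cast htn), ← Int.natCast_dvd_natCast,
    Nat.cast_sub hn, Nat.cast_one]

end

theorem coker_sqrt_eq_zmod_general (n : ℕ) (hsq : ¬IsSquare n) :
    Nonempty
      ((↥(Subring.closure {Real.sqrt n, (Real.sqrt n)⁻¹}) ⧸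
          (AddMonoidHom.mulLeft
            (1 - (⟨Real.sqrt n, Subring.subset_closure (Set.mem_insert _ _)⟩ :
              Subring.closure {Real.sqrt n, (Real.sqrt n)⁻¹}))).range) ≃+
        ZMod (n - 1)) := by
  have hirr : Irrational √n := irrational_sqrt_natCast_iff.mpr hsq
  have htn : √n * √n = n := Real.mul_self_sqrt n.cast_nonneg
  let u : Subring.closure {√(n : ℝ), (√(n : ℝ))⁻¹} :=
    ⟨√n, Subring.subset_closure (Set.mem_insert _ _)⟩
  have := charP_quotient_span_one_sub u rfl hirr htn
  exact ⟨(QuotientAddGroup.quotientAddEquivOfEq (AddMonoidHom.range_mulLeft _)).trans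
    (ZMod.ringEquivOfIntCastSurjective _ _
      (intCast_surjective_quotient_span_one_sub u rfl hirr.ne_zero)).symm.toAddEquiv⟩

/-- Let `n ≥ 2` be an integer which is not a perfect square and let
`λ = √n`.  Then `Γ_λ/(1−λ)Γ_λ ≅ ℤ/(n−1)ℤ`, where `Γ_λ` is (the additive group of) the
subring of `ℝ` generated by `λ` and `λ⁻¹`, and `(1−λ)Γ_λ = {(1−λ)x : x ∈ Γ_λ}`. -/
theorem coker_sqrt_eq_zmod (n : ℕ) (hn : 2 ≤ n) (hsq : ¬IsSquare n) :
    Nonempty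
      ((↥(Subring.closure {Real.sqrt n, (Real.sqrt n)⁻¹}) ⧸
          (AddMonoidHom.mulLeft
            (1 - (⟨Real.sqrt n, Subring.subset_closure (Set.mem_insert _ _)⟩ :
              Subring.closure {Real.sqrt n, (Real.sqrt n)⁻¹}))).range) ≃+
        ZMod (n - 1)) :=
  coker_sqrt_eq_zmod_general n hsq
end

section
/- Let n ≥ 2 be an integer, set a = −2 − n, and let λ = −a/2 + √(a²/4 − 2) ∈ ℝ. Then λ > 0, λ is irrational, λ is an algebraic integer whose minimal polynomial over ℚ is T² + aT + 2, and ℤ[λ]/(1−λ)ℤ[λ] ≅ ℤ/(n−1)ℤ as abelian groups. -/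
/-!
`λ` is the larger root of `g = T² + aT + 2`; since `g(n+1) = 1 - n < 0 < 2 = g(n+2)`, it lies
strictly between two consecutive integers, so this algebraic integer is irrational and `g` is its
minimal polynomial. As `g` is monic, `p(λ) = 0` holds for `p ∈ ℤ[T]` exactly when `g ∣ p`, so
`ℤ[λ] ≅ ℤ[T]/(g)`. Modulo `1 - λ` every `p(λ)` is congruent to the integer `p(1)`, and an
integer `k` is a multiple of `1 - λ` exactly when `g(1) = 1 - n` divides `k`; hence
`ℤ[λ]/(1 - λ) ≅ ℤ/(n - 1)`.
-/

open Polynomial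

section QuotientByOneSub

variable {R : Type*} [CommRing R]

theorem mem_range_mulLeft_iff_dvd {c z : R} : z ∈ (AddMonoidHom.mulLeft c).range ↔ c ∣ z := by
  simp only [AddMonoidHom.mem_range, AddMonoidHom.coe_mulLeft, dvd_def, eq_comm]

theorem one_sub_dvd_aeval_sub_eval_one (y : R) (p : ℤ[X]) :
    1 - y ∣ aeval y p - ((p.eval 1 : ℤ) : R) := by
  have h := sub_dvd_eval_sub y 1 (p.map (algebraMap ℤ R))
  rw [eval_map_algebraMap, eval_map, eval₂_at_one, eq_intCast] at h
  rwa [← neg_sub, neg_dvd]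

variable {y : R} {g : ℤ[X]}

theorem one_sub_dvd_intCast_iff (hsurj : Function.Surjective (aeval y : ℤ[X] → R))
    (hker : ∀ p : ℤ[X], aeval y p = 0 ↔ g ∣ p) (k : ℤ) :
    1 - y ∣ (k : R) ↔ g.eval 1 ∣ k := by
  constructor
  · rintro ⟨w, hw⟩
    obtain ⟨r, rfl⟩ := hsurj w
    have hdvd : g ∣ C k - (1 - X) * r := (hker _).1 (by simp [hw])
    simpa using eval_dvd (x := 1) hdvd
  · rintro ⟨j, rfl⟩
    have h := one_sub_dvd_aeval_sub_eval_one y g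
    rw [(hker g).2 dvd_rfl, zero_sub, dvd_neg] at h
    rw [Int.cast_mul]
    exact h.mul_right _

variable (y) in
noncomputable def intCastToQuotientOneSub : ℤ →+ R ⧸ (AddMonoidHom.mulLeft (1 - y)).range :=
  (QuotientAddGroup.mk' _).comp (Int.castAddHom R)

theorem intCastToQuotientOneSub_surjective (hsurj : Function.Surjective (aeval y : ℤ[X] → R)) :
    Function.Surjective (intCastToQuotientOneSub y) := by
  rintro ⟨z⟩
  obtain ⟨p, rfl⟩ := hsurj z
  refine ⟨p.eval 1, QuotientAddGroup.eq.2 ?_⟩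
  rw [mem_range_mulLeft_iff_dvd, neg_add_eq_sub]
  exact one_sub_dvd_aeval_sub_eval_one y p

theorem ker_intCastToQuotientOneSub (hsurj : Function.Surjective (aeval y : ℤ[X] → R))
    (hker : ∀ p : ℤ[X], aeval y p = 0 ↔ g ∣ p) :
    (intCastToQuotientOneSub y).ker = AddSubgroup.zmultiples (g.eval 1) := by
  ext k
  rw [AddMonoidHom.mem_ker, Int.mem_zmultiples_iff, ← one_sub_dvd_intCast_iff hsurj hker,
    ← mem_range_mulLeft_iff_dvd]
  exact QuotientAddGroup.eq_zero_iff _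

noncomputable def quotientOneSubEquivZMod (hsurj : Function.Surjective (aeval y : ℤ[X] → R))
    (hker : ∀ p : ℤ[X], aeval y p = 0 ↔ g ∣ p) :
    R ⧸ (AddMonoidHom.mulLeft (1 - y)).range ≃+ ZMod (g.eval 1).natAbs :=
  (QuotientAddGroup.quotientKerEquivOfSurjective _
      (intCastToQuotientOneSub_surjective hsurj)).symm.trans <|
    (QuotientAddGroup.quotientAddEquivOfEq (ker_intCastToQuotientOneSub hsurj hker)).trans
      (Int.quotientZMultiplesEquivZMod _)

end QuotientByOneSub

section ClosureSingleton

variable {A : Type*} [CommRing A] {x : A}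

theorem exists_aeval_eq_of_mem_closure_singleton {z : A} (hz : z ∈ Subring.closure {x}) :
    ∃ p : ℤ[X], aeval x p = z := by
  rwa [← mem_subalgebraOfSubring, ← Algebra.adjoin_int,
    Algebra.adjoin_singleton_eq_range_aeval] at hz

variable (x) in
def closureSingletonGen : Subring.closure {x} :=
  ⟨x, Subring.subset_closure (Set.mem_singleton x)⟩

theorem coe_aeval_closureSingletonGen (p : ℤ[X]) :
    (aeval (closureSingletonGen x) p : A) = aeval x p :=
  (aeval_algHom_apply (Subring.closure {x}).subtype.toIntAlgHom _ p).symm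

theorem aeval_closureSingletonGen_surjective :
    Function.Surjective (aeval (closureSingletonGen x) : ℤ[X] → Subring.closure {x}) := by
  rintro ⟨z, hz⟩
  obtain ⟨p, hp⟩ := exists_aeval_eq_of_mem_closure_singleton hz
  exact ⟨p, Subtype.ext ((coe_aeval_closureSingletonGen p).trans hp)⟩

noncomputable def closureSingletonQuotientOneSubEquivZMod {g : ℤ[X]}
    (hker : ∀ p : ℤ[X], aeval x p = 0 ↔ g ∣ p) :
    Subring.closure {x} ⧸ (AddMonoidHom.mulLeft (1 - closureSingletonGen x)).range ≃+
      ZMod (g.eval 1).natAbs :=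
  quotientOneSubEquivZMod aeval_closureSingletonGen_surjective fun p => by
    rw [← hker, ← coe_aeval_closureSingletonGen (x := x), ZeroMemClass.coe_eq_zero]

end ClosureSingleton

theorem aeval_eq_zero_iff_dvd_of_minpoly_eq_map {L : Type*} [Ring L] [Algebra ℚ L] {x : L}
    {g : ℤ[X]} (hg : g.Monic) (hmin : minpoly ℚ x = g.map (algebraMap ℤ ℚ)) (p : ℤ[X]) :
    aeval x p = 0 ↔ g ∣ p := by
  rw [← aeval_map_algebraMap ℚ, ← minpoly.dvd_iff, hmin,
    map_dvd_map _ (algebraMap ℤ ℚ).injective_int hg]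

theorem minpoly_eq_of_natDegree_eq_two {K L : Type*} [Field K] [Ring L] [Nontrivial L]
    [Algebra K L] {x : L} {p : K[X]} (hp : p.Monic) (hdeg : p.natDegree = 2) (hx : aeval x p = 0)
    (hxK : x ∉ (algebraMap K L).range) : minpoly K x = p := by
  have hint : IsIntegral K x := ⟨p, hp, hx⟩
  refine (eq_of_monic_of_dvd_of_natDegree_le (minpoly.monic hint) hp (minpoly.dvd K x hx) ?_).symm
  exact hdeg ▸ (minpoly.two_le_natDegree_iff hint).2 hxK

theorem irrational_of_isIntegral_of_lt_of_lt {x : ℝ} (hx : IsIntegral ℤ x) {m : ℤ}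
    (hlow : (m : ℝ) < x) (hup : x < m + 1) : Irrational x := by
  rintro ⟨q, rfl⟩
  have hq : IsIntegral ℤ q :=
    (isIntegral_algHom_iff (Rat.castHom ℝ).toIntAlgHom Rat.cast_injective).1 hx
  obtain ⟨k, rfl⟩ := IsIntegrallyClosed.isIntegral_iff.1 hq
  simp only [eq_intCast, Rat.cast_intCast] at hlow hup
  norm_cast at hlow hup
  omega

theorem sq_add_mul_add_eq_zero_of_eq_neg_half_add_sqrt {a c r : ℝ} (hc : c ≤ a ^ 2 / 4)
    (hr : r = -a / 2 + √(a ^ 2 / 4 - c)) : r ^ 2 + a * r + c = 0 := by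
  have hsq := Real.sq_sqrt (sub_nonneg.2 hc)
  rw [hr]
  linear_combination hsq

theorem add_one_lt_and_lt_add_two_of_root {t r : ℝ} (ht : 2 ≤ t)
    (hr : r ^ 2 - (t + 2) * r + 2 = 0) (hr' : (t + 2) / 2 ≤ r) : t + 1 < r ∧ r < t + 2 := by
  constructor <;> nlinarith

/-- **Statement 17.** Let `n ≥ 2` be an integer, set `a = −2 − n`, and let
`λ = −a/2 + √(a²/4 − 2) ∈ ℝ`.  Then `λ > 0`, `λ` is irrational, `λ` is an algebraic
integer whose minimal polynomial over `ℚ` is `T² + aT + 2`, and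
`ℤ[λ]/(1−λ)ℤ[λ] ≅ ℤ/(n−1)ℤ` as abelian groups, where `ℤ[λ]` is the subring of `ℝ`
generated by `λ` and `(1−λ)ℤ[λ] = {(1−λ)x : x ∈ ℤ[λ]}`. -/
theorem cuntz_algebra_parameter (n : ℕ) (hn : 2 ≤ n) (a : ℤ) (ha : a = -2 - n)
    (lam : ℝ) (hlam : lam = -(a : ℝ) / 2 + Real.sqrt ((a : ℝ) ^ 2 / 4 - 2)) :
    0 < lam ∧ Irrational lam ∧ IsIntegral ℤ lam ∧
    minpoly ℚ lam = X ^ 2 + C (a : ℚ) * X + C 2 ∧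
    Nonempty
      ((↥(Subring.closure {lam}) ⧸
          (AddMonoidHom.mulLeft
            (1 - (⟨lam, Subring.subset_closure (Set.mem_singleton lam)⟩ :
              Subring.closure {lam}))).range) ≃+
        ZMod (n - 1)) := by
  have hn' : (2 : ℝ) ≤ n := by exact_mod_cast hn
  have haR : (a : ℝ) = -2 - n := by rw [ha]; push_cast; ring
  have hroot : lam ^ 2 + a * lam + 2 = 0 :=
    sq_add_mul_add_eq_zero_of_eq_neg_half_add_sqrt (by nlinarith) hlam
  obtain ⟨hlow, hup⟩ : (n : ℝ) + 1 < lam ∧ lam < n + 2 :=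
    add_one_lt_and_lt_add_two_of_root hn' (by linear_combination hroot - lam * haR)
      (by rw [hlam]; linarith [Real.sqrt_nonneg ((a : ℝ) ^ 2 / 4 - 2)])
  set g : ℤ[X] := X ^ 2 + C a * X + C 2 with hg_def
  have hg : g.Monic := by rw [hg_def]; monicity!
  have hgQ : g.map (algebraMap ℤ ℚ) = X ^ 2 + C (a : ℚ) * X + C 2 := by
    simp only [g, Polynomial.map_add, Polynomial.map_mul, Polynomial.map_pow, map_X, map_C]
    simp
  have hglam : aeval lam g = 0 := by
    simp only [g, map_add, map_mul, map_pow, aeval_X, eq_intCast, map_intCast, map_ofNat]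
    linear_combination hroot
  have hint : IsIntegral ℤ lam := ⟨g, hg, hglam⟩
  have hirr : Irrational lam :=
    irrational_of_isIntegral_of_lt_of_lt hint (m := n + 1) (by push_cast; exact hlow)
      (by push_cast; linarith)
  have hmin : minpoly ℚ lam = g.map (algebraMap ℤ ℚ) :=
    minpoly_eq_of_natDegree_eq_two (hg.map _) (by rw [hgQ]; compute_degree!)
      (by rwa [aeval_map_algebraMap]) fun ⟨q, hq⟩ => hirr ⟨q, hq⟩
  have hg1 : (g.eval 1).natAbs = n - 1 := by
    have h : g.eval 1 = 1 - n := by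
      simp only [g, eval_add, eval_mul, eval_pow, eval_X, eval_C]
      linear_combination ha
    omega
  refine ⟨by linarith, hirr, hint, hmin.trans hgQ, ⟨hg1 ▸
    closureSingletonQuotientOneSubEquivZMod (aeval_eq_zero_iff_dvd_of_minpoly_eq_map hg hmin)⟩⟩
end
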